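/- Under the hypotheses of the previous setup (ẋ₁ = x₂, ẋ₂ = -β·f''(x₁)·x₂ - (α₁/2)(x₂ + β·f'(x₁)) with S = ½(x₂ + β f'(x₁))²), every solution satisfies S(x₁(t), x₂(t)) = S(x₁(0), x₂(0))·e^{-α₁ t}, i.e., |x₂(t) + β f'(x₁(t))| = |x₂(0) + β f'(x₁(0))|·e^{-α₁ t / 2}; thus the off-manifold coordinate converges to the manifold {x₂ = -β f'(x₁)} exponentially with rate α₁/2. -/

import Mathlib

/-- along solutions, S(x₁(t),x₂(t)) = S(x₁(0),x₂(0)) e^{-α₁ t}, i.e.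
|x₂(t) + β f'(x₁(t))| = |x₂(0) + β f'(x₁(0))| e^{-α₁ t / 2}. -/
theorem stmt2 (f : ℝ → ℝ) (hf : ContDiff ℝ 2 f) (β α₁ : ℝ) (hβ : 0 < β) (hα₁ : 0 < α₁)
    (x₁ x₂ : ℝ → ℝ)
    (hx₁ : ∀ t ≥ (0:ℝ), HasDerivAt x₁ (x₂ t) t)
    (hx₂ : ∀ t ≥ (0:ℝ), HasDerivAt x₂
      (-β * deriv (deriv f) (x₁ t) * x₂ t - (α₁ / 2) * (x₂ t + β * deriv f (x₁ t))) t) :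
    ∀ t ≥ (0:ℝ),
      (1 / 2) * (x₂ t + β * deriv f (x₁ t)) ^ 2 =
        ((1 / 2) * (x₂ 0 + β * deriv f (x₁ 0)) ^ 2) * Real.exp (-α₁ * t) ∧
      |x₂ t + β * deriv f (x₁ t)| =
        |x₂ 0 + β * deriv f (x₁ 0)| * Real.exp (-α₁ * t / 2) := by
  set c := α₁ / 2 with hc
  -- deriv f is differentiable
  have hdf : ContDiff ℝ 1 (deriv f) := by
    have := (contDiff_succ_iff_deriv (n := 1)).mp (by exact_mod_cast hf)
    exact this.2.2
  have hdfd : ∀ y : ℝ, HasDerivAt (deriv f) (deriv (deriv f) y) y := fun y =>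
    ((hdf.differentiable one_ne_zero) y).hasDerivAt
  set u : ℝ → ℝ := fun t => x₂ t + β * deriv f (x₁ t) with hu
  have hu' : ∀ t ≥ (0:ℝ), HasDerivAt u (-c * u t) t := by
    intro t ht
    have h1 : HasDerivAt (fun s => deriv f (x₁ s)) (deriv (deriv f) (x₁ t) * x₂ t) t :=
      (hdfd (x₁ t)).comp t (hx₁ t ht)
    have := (hx₂ t ht).add (h1.const_mul β)
    exact this.congr_deriv (by simp only [hu]; ring)
  set g : ℝ → ℝ := fun t => u t * Real.exp (c * t) with hg
  have hg' : ∀ t ≥ (0:ℝ), HasDerivAt g 0 t := by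
    intro t ht
    have he : HasDerivAt (fun s => Real.exp (c * s)) (c * Real.exp (c * t)) t := by
      have := ((hasDerivAt_id t).const_mul c).exp
      simpa [mul_comm] using this
    have := (hu' t ht).mul he
    exact this.congr_deriv (by ring)
  have hconst : ∀ t ≥ (0:ℝ), g t = g 0 := by
    intro t ht
    have hcont : ContinuousOn g (Set.Icc 0 t) := fun s hs =>
      ((hg' s hs.1).continuousAt).continuousWithinAt
    have hderiv : ∀ s ∈ Set.Ico (0:ℝ) t, HasDerivWithinAt g 0 (Set.Ici s) s := fun s hs =>
      (hg' s hs.1).hasDerivWithinAt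
    exact constant_of_has_deriv_right_zero hcont hderiv t ⟨ht, le_rfl⟩
  intro t ht
  have key : u t = u 0 * Real.exp (-c * t) := by
    have h := hconst t ht
    simp only [hg, mul_zero, Real.exp_zero, mul_one] at h
    have hne : Real.exp (c * t) ≠ 0 := (Real.exp_pos _).ne'
    rw [neg_mul, Real.exp_neg]
    field_simp
    linarith [h]
  constructor
  · have : u t ^ 2 = u 0 ^ 2 * Real.exp (-α₁ * t) := by
      rw [key, mul_pow, ← Real.exp_nat_mul]
      congr 1
      push_cast
      rw [hc]; ring
    simp only [hu] at this
    linarith [this]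
  · have : |u t| = |u 0| * Real.exp (-α₁ * t / 2) := by
      rw [key, abs_mul, Real.abs_exp]
      congr 2
      rw [hc]; ring
    simpa [hu] using this
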